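/- Geometric decay of cell diameters under equiprobable coordinate splits (Lemma 1, stated for an arbitrary equiprobable split sequence): Let μ have density f with 0 < m ≤ f ≤ M on the box B₀, with μ(B₀) > 0. Let s : {1,…,L} → {1,…,d} be a splitting schedule, and let B₀ ⊇ B₁ ⊇ ⋯ ⊇ B_L be axis-aligned boxes such that for each l ∈ {1,…,L}, B_l coincides with B_{l−1} in every coordinate except s(l), in which its interval is a subinterval of the corresponding interval of B_{l−1}, and μ(B_l) = (1/2)·μ(B_{l−1}). Suppose there is a constant c_s > 0 such that #{l ≤ L : s(l) = j} ≥ c_s·L/d for every coordinate j ∈ {1,…,d}. Then, with ρ := 1 − m/(2M) ∈ (0,1), the Euclidean diameter of B_L satisfies diam(B_L) ≤ √d · max_{1≤j≤d}(U_{0,j} − L_{0,j}) · ρ^{c_s L / d}. -/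

import Mathlib

/-!
If a box `B` is cut along coordinate `j` into `B' ⊆ B` with `μ B' = μ B / 2`, the removed part
`B \ B'` has mass `μ B / 2 ≥ m · vol B / 2` and at most `M · vol (B \ B')`. Since `B` and `B'` have
the same sides in the other coordinates, this says that the `j`-th side shrinks by the factor
`1 - m / (2M)`. After `L` cuts each coordinate has been cut at least `c_s L / d` times, and the
Euclidean diameter of a box is at most `√d` times its longest side.
-/

open MeasureTheory Set

lemma one_sub_div_two_mul_mem_Ioo {m M : ℝ} (hm : 0 < m) (hmM : m ≤ M) :
    1 - m / (2 * M) ∈ Ioo 0 1 := by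
  have hM : 0 < M := hm.trans_le hmM
  constructor
  · rw [sub_pos, div_lt_one (by positivity)]
    linarith
  · rw [sub_lt_self_iff]
    positivity

section WithDensity

variable {α : Type*} [MeasurableSpace α] (ν : Measure α) {f : α → ℝ} {S T : Set α}

lemma withDensity_ofReal_apply_le {M : ℝ} (hS : MeasurableSet S) (hf : ∀ x ∈ S, f x ≤ M) :
    ν.withDensity (fun x => ENNReal.ofReal (f x)) S ≤ ENNReal.ofReal M * ν S := by
  rw [withDensity_apply _ hS, ← setLIntegral_const]
  exact setLIntegral_mono' hS fun x hx => ENNReal.ofReal_le_ofReal (hf x hx)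

lemma ofReal_mul_le_withDensity_ofReal_apply {m : ℝ} (hS : MeasurableSet S)
    (hf : ∀ x ∈ S, m ≤ f x) :
    ENNReal.ofReal m * ν S ≤ ν.withDensity (fun x => ENNReal.ofReal (f x)) S := by
  rw [withDensity_apply _ hS, ← setLIntegral_const]
  exact setLIntegral_mono' hS fun x hx => ENNReal.ofReal_le_ofReal (hf x hx)

lemma mul_measureReal_le_of_withDensity_half {m M : ℝ} (hm : 0 ≤ m) (hM : 0 ≤ M)
    (hS : MeasurableSet S) (hT : MeasurableSet T) (hTS : T ⊆ S) (hSfin : ν S ≠ ⊤)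
    (hf : ∀ x ∈ S, m ≤ f x ∧ f x ≤ M)
    (hhalf : ν.withDensity (fun x => ENNReal.ofReal (f x)) T =
      ν.withDensity (fun x => ENNReal.ofReal (f x)) S / 2) :
    m * ν.real S ≤ 2 * M * (ν.real S - ν.real T) := by
  set μ := ν.withDensity fun x => ENNReal.ofReal (f x)
  have hμS : μ S ≠ ⊤ := ne_top_of_le_ne_top (by finiteness)
    (withDensity_ofReal_apply_le ν hS fun x hx => (hf x hx).2)
  have hlower : m * ν.real S ≤ μ.real S := by
    have := ENNReal.toReal_mono hμS
      (ofReal_mul_le_withDensity_ofReal_apply ν hS fun x hx => (hf x hx).1)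
    rwa [ENNReal.toReal_mul, ENNReal.toReal_ofReal hm] at this
  have hupper : μ.real (S \ T) ≤ M * ν.real (S \ T) := by
    have := ENNReal.toReal_mono
      (ENNReal.mul_ne_top ENNReal.ofReal_ne_top (measure_ne_top_of_subset sdiff_subset hSfin))
      (withDensity_ofReal_apply_le ν (hS.diff hT) fun x hx => (hf x hx.1).2)
    rwa [ENNReal.toReal_mul, ENNReal.toReal_ofReal hM] at this
  have hhalf_real : μ.real (S \ T) = μ.real S / 2 := by
    rw [measureReal_sdiff hTS hT hμS, measureReal_def, measureReal_def, hhalf,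
      ENNReal.toReal_div]
    norm_num
    ring
  rw [measureReal_sdiff hTS hT hSfin] at hupper
  linarith

end WithDensity

section Box

variable {ι : Type*}

def box (a b : ι → ℝ) : Set (EuclideanSpace ℝ ι) := {u | ∀ j, u j ∈ Icc (a j) (b j)}

lemma box_eq_preimage (a b : ι → ℝ) :
    box a b = (MeasurableEquiv.toLp 2 (ι → ℝ)).symm ⁻¹' univ.pi fun j => Icc (a j) (b j) := by
  ext u
  exact ⟨fun h j _ => h j, fun h j => h j (mem_univ j)⟩

lemma box_subset_box {a b a' b' : ι → ℝ} (h : ∀ j, Icc (a' j) (b' j) ⊆ Icc (a j) (b j)) :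
    box a' b' ⊆ box a b :=
  fun _ hu j => h j (hu j)

variable [Fintype ι]

lemma measurableSet_box (a b : ι → ℝ) : MeasurableSet (box a b) := by
  rw [box_eq_preimage]
  exact (MeasurableEquiv.toLp 2 (ι → ℝ)).symm.measurable
    (MeasurableSet.univ_pi fun _ => measurableSet_Icc)

lemma volume_box (a b : ι → ℝ) : volume (box a b) = ∏ j, ENNReal.ofReal (b j - a j) := by
  rw [box_eq_preimage,
    (EuclideanSpace.volume_preserving_symm_measurableEquiv_toLp ι).measure_preimage
      (MeasurableSet.univ_pi fun _ => measurableSet_Icc).nullMeasurableSet, volume_pi_pi]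
  simp only [Real.volume_Icc]

lemma volume_real_box {a b : ι → ℝ} (hab : ∀ j, a j ≤ b j) :
    volume.real (box a b) = ∏ j, (b j - a j) := by
  rw [measureReal_def, volume_box, ← ENNReal.ofReal_prod_of_nonneg fun j _ => sub_nonneg.2 (hab j),
    ENNReal.toReal_ofReal (Finset.prod_nonneg fun j _ => sub_nonneg.2 (hab j))]

lemma lt_of_volume_box_ne_zero {a b : ι → ℝ} (h : volume (box a b) ≠ 0) (j : ι) : a j < b j := by
  rw [volume_box, Finset.prod_ne_zero_iff] at h
  simpa using h j (Finset.mem_univ j)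

lemma diam_box_le {a b : ι → ℝ} {r : ℝ} (hr : 0 ≤ r) (h : ∀ j, b j - a j ≤ r) :
    Metric.diam (box a b) ≤ √(Fintype.card ι) * r := by
  refine Metric.diam_le_of_forall_dist_le (by positivity) fun u hu v hv => ?_
  have hcoord : ∀ j, dist (u j) (v j) ^ 2 ≤ r ^ 2 := fun j =>
    pow_le_pow_left₀ dist_nonneg ((Real.dist_le_of_mem_Icc (hu j) (hv j)).trans (h j)) 2
  calc dist u v = √(∑ j, dist (u j) (v j) ^ 2) := EuclideanSpace.dist_eq u v
    _ ≤ √(Fintype.card ι * r ^ 2) := by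
      gcongr
      simpa using Finset.sum_le_card_nsmul Finset.univ _ _ fun j _ => hcoord j
    _ = √(Fintype.card ι) * r := by rw [Real.sqrt_mul (Nat.cast_nonneg _), Real.sqrt_sq hr]

variable [DecidableEq ι] {f : EuclideanSpace ℝ ι → ℝ} {m M : ℝ}

lemma sub_le_of_withDensity_box_half {a b a' b' : ι → ℝ} {j : ι} (hm : 0 < m) (hM : 0 < M)
    (hf : ∀ u ∈ box a b, m ≤ f u ∧ f u ≤ M)
    (hcoord : ∀ k ≠ j, a' k = a k ∧ b' k = b k) (hsub : box a' b' ⊆ box a b)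
    (hhalf : volume.withDensity (fun u => ENNReal.ofReal (f u)) (box a' b') =
      volume.withDensity (fun u => ENNReal.ofReal (f u)) (box a b) / 2)
    (hpos : volume.withDensity (fun u => ENNReal.ofReal (f u)) (box a' b') ≠ 0) :
    b' j - a' j ≤ (1 - m / (2 * M)) * (b j - a j) := by
  have hvol' : volume (box a' b') ≠ 0 := fun h => hpos (withDensity_absolutelyContinuous _ _ h)
  have hvol : volume (box a b) ≠ 0 := fun h => hvol' (measure_mono_null hsub h)
  have hab := lt_of_volume_box_ne_zero hvol
  have hab' := lt_of_volume_box_ne_zero hvol'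
  set P := ∏ k ∈ Finset.univ.erase j, (b k - a k)
  have hP : 0 < P := Finset.prod_pos fun k _ => sub_pos.2 (hab k)
  have hV : volume.real (box a b) = (b j - a j) * P := by
    rw [volume_real_box fun k => (hab k).le, ← Finset.mul_prod_erase _ _ (Finset.mem_univ j)]
  have hV' : volume.real (box a' b') = (b' j - a' j) * P := by
    rw [volume_real_box fun k => (hab' k).le, ← Finset.mul_prod_erase _ _ (Finset.mem_univ j)]
    congr 1
    refine Finset.prod_congr rfl fun k hk => ?_
    rw [(hcoord k (Finset.ne_of_mem_erase hk)).1, (hcoord k (Finset.ne_of_mem_erase hk)).2]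
  have hfin : volume (box a b) ≠ ⊤ := by
    rw [volume_box]
    exact ENNReal.prod_ne_top fun _ _ => ENNReal.ofReal_ne_top
  have hmass := mul_measureReal_le_of_withDensity_half volume hm.le hM.le (measurableSet_box a b)
    (measurableSet_box a' b') hsub hfin hf hhalf
  rw [hV, hV'] at hmass
  have hcancel : m * (b j - a j) ≤ 2 * M * ((b j - a j) - (b' j - a' j)) :=
    le_of_mul_le_mul_right (by linarith) hP
  have hshrink : m / (2 * M) * (b j - a j) ≤ (b j - a j) - (b' j - a' j) := by
    rw [div_mul_eq_mul_div, div_le_iff₀ (by positivity)]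
    linarith
  linarith

lemma card_filter_Icc_one_succ {α : Type*} [DecidableEq α] (s : ℕ → α) (j : α) (n : ℕ) :
    ((Finset.Icc 1 (n + 1)).filter (fun k => s k = j)).card =
      ((Finset.Icc 1 n).filter (fun k => s k = j)).card + if s (n + 1) = j then 1 else 0 := by
  simp only [Finset.card_filter]
  exact Finset.sum_Icc_succ_top (by omega) _

lemma sub_le_pow_card_mul_of_withDensity_box_halving {a b : ℕ → ι → ℝ} {s : ℕ → ι} {L : ℕ}
    (hm : 0 < m) (hmM : m ≤ M) (hf : ∀ u ∈ box (a 0) (b 0), m ≤ f u ∧ f u ≤ M)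
    (hpos : volume.withDensity (fun u => ENNReal.ofReal (f u)) (box (a 0) (b 0)) ≠ 0)
    (hnest : ∀ l, 1 ≤ l → l ≤ L →
      (∀ j, j ≠ s l → a l j = a (l - 1) j ∧ b l j = b (l - 1) j) ∧
      Icc (a l (s l)) (b l (s l)) ⊆ Icc (a (l - 1) (s l)) (b (l - 1) (s l)) ∧
      volume.withDensity (fun u => ENNReal.ofReal (f u)) (box (a l) (b l)) =
        volume.withDensity (fun u => ENNReal.ofReal (f u)) (box (a (l - 1)) (b (l - 1))) / 2)
    {l : ℕ} (hl : l ≤ L) (j : ι) :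
    b l j - a l j ≤
      (1 - m / (2 * M)) ^ ((Finset.Icc 1 l).filter (fun k => s k = j)).card * (b 0 j - a 0 j) := by
  have hρ : 0 ≤ 1 - m / (2 * M) := (one_sub_div_two_mul_mem_Ioo hm hmM).1.le
  suffices ∀ l ≤ L, box (a l) (b l) ⊆ box (a 0) (b 0) ∧
      volume.withDensity (fun u => ENNReal.ofReal (f u)) (box (a l) (b l)) ≠ 0 ∧
      ∀ j, b l j - a l j ≤
        (1 - m / (2 * M)) ^ ((Finset.Icc 1 l).filter (fun k => s k = j)).card * (b 0 j - a 0 j) from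
    (this l hl).2.2 j
  intro l
  induction l with
  | zero => simpa using hpos
  | succ n ih =>
    intro hn
    obtain ⟨hsub0, hposn, hwidth⟩ := ih (by omega)
    obtain ⟨hcoord, hIcc, hhalf⟩ := hnest (n + 1) (by omega) hn
    simp only [Nat.add_sub_cancel] at hcoord hIcc hhalf
    have hsub : box (a (n + 1)) (b (n + 1)) ⊆ box (a n) (b n) := box_subset_box fun k => by
      by_cases hk : k = s (n + 1)
      · subst hk; exact hIcc
      · rw [(hcoord k hk).1, (hcoord k hk).2]
    have hpos' : volume.withDensity (fun u => ENNReal.ofReal (f u))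
        (box (a (n + 1)) (b (n + 1))) ≠ 0 := by
      rw [hhalf]
      exact ENNReal.div_ne_zero.2 ⟨hposn, ENNReal.ofNat_ne_top⟩
    refine ⟨hsub.trans hsub0, hpos', fun k => ?_⟩
    rw [card_filter_Icc_one_succ]
    by_cases hk : k = s (n + 1)
    · subst hk
      rw [if_pos rfl, pow_succ', mul_assoc]
      exact (sub_le_of_withDensity_box_half hm (hm.trans_le hmM) (fun u hu => hf u (hsub0 hu))
        hcoord hsub hhalf hpos').trans (mul_le_mul_of_nonneg_left (hwidth _) hρ)
    · rw [if_neg (Ne.symm hk), add_zero, (hcoord k hk).1, (hcoord k hk).2]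
      exact hwidth k

end Box

theorem stmt_0_general (d L : ℕ)
    (a b : ℕ → Fin d → ℝ)
    (B : ℕ → Set (EuclideanSpace ℝ (Fin d)))
    (hB : ∀ l, B l = {u : EuclideanSpace ℝ (Fin d) | ∀ j, u j ∈ Set.Icc (a l j) (b l j)})
    (f : EuclideanSpace ℝ (Fin d) → ℝ)
    (m M : ℝ) (hm : 0 < m)
    (hfb : ∀ u ∈ B 0, m ≤ f u ∧ f u ≤ M)
    (μ : Measure (EuclideanSpace ℝ (Fin d)))
    (hμ : μ = volume.withDensity (fun u => ENNReal.ofReal (f u)))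
    (hpos : 0 < μ (B 0))
    (s : ℕ → Fin d)
    (hnest : ∀ l, 1 ≤ l → l ≤ L →
      (∀ j, j ≠ s l → a l j = a (l - 1) j ∧ b l j = b (l - 1) j) ∧
      Set.Icc (a l (s l)) (b l (s l)) ⊆ Set.Icc (a (l - 1) (s l)) (b (l - 1) (s l)) ∧
      μ (B l) = μ (B (l - 1)) / 2)
    (c_s : ℝ)
    (hcount : ∀ j : Fin d,
      c_s * (L : ℝ) / (d : ℝ) ≤
        (((Finset.Icc 1 L).filter (fun l => s l = j)).card : ℝ)) :
    (0 < 1 - m / (2 * M) ∧ 1 - m / (2 * M) < 1) ∧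
    Metric.diam (B L) ≤
      Real.sqrt d * (⨆ j : Fin d, (b 0 j - a 0 j)) *
        (1 - m / (2 * M)) ^ (c_s * (L : ℝ) / (d : ℝ)) := by
  obtain rfl : B = fun l => box (a l) (b l) := funext hB
  subst hμ
  obtain ⟨u, hu⟩ := nonempty_of_measure_ne_zero hpos.ne'
  have hmM : m ≤ M := (hfb u hu).1.trans (hfb u hu).2
  obtain ⟨hρ0, hρ1⟩ := one_sub_div_two_mul_mem_Ioo hm hmM
  refine ⟨⟨hρ0, hρ1⟩, ?_⟩
  have hw0 : ∀ j, 0 ≤ b 0 j - a 0 j := fun j => sub_nonneg.2 ((hu j).1.trans (hu j).2)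
  have hwidth : ∀ j, b L j - a L j ≤
      (1 - m / (2 * M)) ^ (c_s * (L : ℝ) / (d : ℝ)) * ⨆ j, (b 0 j - a 0 j) := fun j => by
    refine (sub_le_pow_card_mul_of_withDensity_box_halving hm hmM hfb hpos.ne' hnest le_rfl j).trans
      (mul_le_mul ?_ (le_ciSup (finite_range fun j => b 0 j - a 0 j).bddAbove j) (hw0 j)
        (by positivity))
    rw [← Real.rpow_natCast]
    exact Real.rpow_le_rpow_of_exponent_ge hρ0 hρ1.le (hcount j)
  calc Metric.diam (box (a L) (b L))
      ≤ √(Fintype.card (Fin d)) * ((1 - m / (2 * M)) ^ (c_s * (L : ℝ) / (d : ℝ)) *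
          ⨆ j, (b 0 j - a 0 j)) :=
        diam_box_le (mul_nonneg (by positivity) (Real.iSup_nonneg hw0)) hwidth
    _ = _ := by rw [Fintype.card_fin]; ring

/-- Geometric decay of cell diameters under equiprobable coordinate splits (Lemma 1). -/
theorem stmt_0 (d L : ℕ) (hd : 1 ≤ d)
    (a b : ℕ → Fin d → ℝ)
    (B : ℕ → Set (EuclideanSpace ℝ (Fin d)))
    (hB : ∀ l, B l = {u : EuclideanSpace ℝ (Fin d) | ∀ j, u j ∈ Set.Icc (a l j) (b l j)})
    (hab : ∀ j, a 0 j < b 0 j)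
    (f : EuclideanSpace ℝ (Fin d) → ℝ) (hf : Measurable f)
    (m M : ℝ) (hm : 0 < m)
    (hfb : ∀ u ∈ B 0, m ≤ f u ∧ f u ≤ M)
    (μ : Measure (EuclideanSpace ℝ (Fin d)))
    (hμ : μ = volume.withDensity (fun u => ENNReal.ofReal (f u)))
    (hpos : 0 < μ (B 0))
    (s : ℕ → Fin d)
    (hnest : ∀ l, 1 ≤ l → l ≤ L →
      (∀ j, j ≠ s l → a l j = a (l - 1) j ∧ b l j = b (l - 1) j) ∧
      Set.Icc (a l (s l)) (b l (s l)) ⊆ Set.Icc (a (l - 1) (s l)) (b (l - 1) (s l)) ∧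
      μ (B l) = μ (B (l - 1)) / 2)
    (c_s : ℝ) (hc : 0 < c_s)
    (hcount : ∀ j : Fin d,
      c_s * (L : ℝ) / (d : ℝ) ≤
        (((Finset.Icc 1 L).filter (fun l => s l = j)).card : ℝ)) :
    (0 < 1 - m / (2 * M) ∧ 1 - m / (2 * M) < 1) ∧
    Metric.diam (B L) ≤
      Real.sqrt d * (⨆ j : Fin d, (b 0 j - a 0 j)) *
        (1 - m / (2 * M)) ^ (c_s * (L : ℝ) / (d : ℝ)) :=
  stmt_0_general d L a b B hB f m M hm hfb μ hμ hpos s hnest c_s hcount
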